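/- arXiv:0806.2640 — 3 statements merged into one kernel-verified Lean document; each statement's English description precedes it below -/
import Mathlib

section
/- Let K_i : 𝔻^N × 𝔻^N → ℂ be positive definite kernels satisfying, for a function f with |f| ≤ 1 on 𝔻^N, the identity 1 - f(z) conj(f(w)) = ∑_{i=1}^N (1 - z_i conj(w_i)) K_i(z,w). Then for all z, w ∈ 𝔻^N and each i, |K_i(z,w)|^2 ≤ 1 / ((1 - |z_i|^2)(1 - |w_i|^2)). In particular each K_i is bounded on (r𝔻)^N × (r𝔻)^N for every 0 < r < 1. -/
/-!
Setting `w = z` in the decomposition gives `1 - |f z|² = ∑ⱼ (1 - |z_j|²) K_j(z,z)` with nonnegative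
summands, so `K_i(z,z) ≤ 1 / (1 - |z_i|²)`. The off-diagonal bound is then the Cauchy–Schwarz
inequality `|K(z,w)|² ≤ K(z,z) K(w,w)`, which is the nonnegativity of the determinant of the
`2 × 2` Gram matrix of a positive definite kernel.
-/

open Complex Finset ComplexOrder

/-- A kernel `K : D → D → ℂ` is positive definite if every finite Gram matrix is
positive semidefinite, equivalently all quadratic forms are nonnegative. -/
def IsPosDefKernel {D : Type*} (K : D → D → ℂ) : Prop :=
  ∀ (n : ℕ) (z : Fin n → D) (c : Fin n → ℂ),
    0 ≤ ∑ i, ∑ j, starRingEnd ℂ (c i) * c j * K (z i) (z j)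

/-- The open unit polydisk in `ℂ^N`. -/
def Polydisk (N : ℕ) : Type := {z : Fin N → ℂ // ∀ i, ‖z i‖ < 1}

open Matrix

namespace Matrix

theorem isHermitian_of_forall_dotProduct_mulVec_nonneg {n : Type*} [Fintype n]
    [DecidableEq n] {M : Matrix n n ℂ} (h : ∀ x, 0 ≤ star x ⬝ᵥ (M *ᵥ x)) : M.IsHermitian := by
  rw [← isSymmetric_toEuclideanLin_iff, LinearMap.isSymmetric_iff_inner_map_self_real]
  intro v
  rw [Complex.conj_eq_iff_im, ← inner_conj_symm, conj_im, neg_eq_zero,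
    EuclideanSpace.inner_eq_star_dotProduct]
  simpa [dotProduct_comm] using (Complex.nonneg_iff.mp (h v.ofLp)).2.symm

end Matrix

namespace IsPosDefKernel

variable {D : Type*} {K : D → D → ℂ}

theorem posSemidef_gram (hK : IsPosDefKernel K) {n : ℕ} (z : Fin n → D) :
    (Matrix.of fun i j => K (z i) (z j)).PosSemidef := by
  have hq : ∀ c, 0 ≤ star c ⬝ᵥ ((Matrix.of fun i j => K (z i) (z j)) *ᵥ c) := fun c => by
    simpa [dotProduct, Matrix.mulVec, mul_sum, mul_assoc, mul_comm, mul_left_comm] using hK n z c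
  exact .of_dotProduct_mulVec_nonneg (Matrix.isHermitian_of_forall_dotProduct_mulVec_nonneg hq) hq

theorem apply_self_nonneg (hK : IsPosDefKernel K) (x : D) : 0 ≤ K x x :=
  (hK.posSemidef_gram ![x]).diag_nonneg (i := 0)

theorem re_apply_self_nonneg (hK : IsPosDefKernel K) (x : D) : 0 ≤ (K x x).re :=
  (Complex.nonneg_iff.mp (hK.apply_self_nonneg x)).1

theorem norm_sq_le (hK : IsPosDefKernel K) (x y : D) :
    ‖K x y‖ ^ 2 ≤ (K x x).re * (K y y).re := by
  have hM := hK.posSemidef_gram ![x, y]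
  have hswap : K y x = starRingEnd ℂ (K x y) := (hM.1.apply 1 0).symm
  have hdet : (‖K x y‖ ^ 2 : ℂ) ≤ K x x * K y y := by
    simpa [Matrix.det_fin_two, hswap, Complex.mul_conj'] using hM.det_nonneg
  have hx_real : (K x x).im = 0 := (Complex.nonneg_iff.mp (hK.apply_self_nonneg x)).2.symm
  simpa [← ofReal_pow, mul_re, hx_real] using (Complex.le_def.mp hdet).1

end IsPosDefKernel

theorem Polydisk.one_sub_norm_sq_pos {N : ℕ} (z : Polydisk N) (i : Fin N) :
    0 < 1 - ‖z.1 i‖ ^ 2 :=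
  sub_pos.2 (pow_lt_one₀ (norm_nonneg _) (z.2 i) two_ne_zero)

theorem re_apply_self_le_one_div {N : ℕ}
    {K : Fin N → Polydisk N → Polydisk N → ℂ} {f : Polydisk N → ℂ}
    (hfact : ∀ z w : Polydisk N,
      1 - f z * starRingEnd ℂ (f w) =
        ∑ i, (1 - z.1 i * starRingEnd ℂ (w.1 i)) * K i z w)
    (hK : ∀ i, IsPosDefKernel (K i)) (z : Polydisk N) (i : Fin N) :
    (K i z z).re ≤ 1 / (1 - ‖z.1 i‖ ^ 2) := by
  have hdiag : 1 - ‖f z‖ ^ 2 = ∑ j, (1 - ‖z.1 j‖ ^ 2) * (K j z z).re := by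
    simpa [Complex.mul_conj', re_sum, ← ofReal_pow, ← ofReal_one, ← ofReal_sub, re_ofReal_mul]
      using congrArg re (hfact z z)
  rw [le_div_iff₀ (z.one_sub_norm_sq_pos i), mul_comm]
  calc (1 - ‖z.1 i‖ ^ 2) * (K i z z).re
      ≤ ∑ j, (1 - ‖z.1 j‖ ^ 2) * (K j z z).re :=
        single_le_sum (fun j _ => mul_nonneg (z.one_sub_norm_sq_pos j).le
          ((hK j).re_apply_self_nonneg z)) (mem_univ i)
    _ = 1 - ‖f z‖ ^ 2 := hdiag.symm
    _ ≤ 1 := sub_le_self _ (sq_nonneg _)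

theorem offdiagonal_bound_general {N : ℕ}
    (K : Fin N → Polydisk N → Polydisk N → ℂ) (f : Polydisk N → ℂ)
    (hfact : ∀ z w : Polydisk N,
      1 - f z * starRingEnd ℂ (f w) =
        ∑ i, (1 - z.1 i * starRingEnd ℂ (w.1 i)) * K i z w)
    (hK : ∀ i, IsPosDefKernel (K i)) :
    ∀ (z w : Polydisk N) (i : Fin N),
      ‖K i z w‖ ^ 2 ≤
        1 / ((1 - ‖z.1 i‖ ^ 2) * (1 - ‖w.1 i‖ ^ 2)) := by
  intro z w i
  calc ‖K i z w‖ ^ 2 ≤ (K i z z).re * (K i w w).re := (hK i).norm_sq_le z w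
    _ ≤ 1 / (1 - ‖z.1 i‖ ^ 2) * (1 / (1 - ‖w.1 i‖ ^ 2)) :=
        mul_le_mul (re_apply_self_le_one_div hfact hK z i) (re_apply_self_le_one_div hfact hK w i)
          ((hK i).re_apply_self_nonneg w) (one_div_pos.2 (z.one_sub_norm_sq_pos i)).le
    _ = 1 / ((1 - ‖z.1 i‖ ^ 2) * (1 - ‖w.1 i‖ ^ 2)) := one_div_mul_one_div _ _

theorem offdiagonal_bound {N : ℕ}
    (K : Fin N → Polydisk N → Polydisk N → ℂ) (f : Polydisk N → ℂ)
    (hf : ∀ z, ‖f z‖ ≤ 1)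
    (hfact : ∀ z w : Polydisk N,
      1 - f z * starRingEnd ℂ (f w) =
        ∑ i, (1 - z.1 i * starRingEnd ℂ (w.1 i)) * K i z w)
    (hK : ∀ i, IsPosDefKernel (K i)) :
    ∀ (z w : Polydisk N) (i : Fin N),
      ‖K i z w‖ ^ 2 ≤
        1 / ((1 - ‖z.1 i‖ ^ 2) * (1 - ‖w.1 i‖ ^ 2)) :=
  offdiagonal_bound_general K f hfact hK
end

section
/- Let T = (T_1,…,T_N) be a commuting N-tuple of strict contractions (‖T_i‖ < 1) on a Hilbert space H, and suppose there are polynomial matrices (or scalar polynomials) f, f_1,…,f_N and a polynomial f_0 and constant δ > 0 such that 1 - f(z) conj(f(w)) = δ + f_0(z) conj(f_0(w)) + ∑_{i=1}^N (1 - z_i conj(w_i)) f_i(z) conj(f_i(w)) as a polynomial identity in z and conj(w). Then I - f(T) f(T)^* = δ I + f_0(T) f_0(T)^* + ∑_{i=1}^N f_i(T) (I - T_i T_i^*) f_i(T)^*, and consequently ‖f(T)‖ ≤ √(1 - δ). -/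
open Complex Finset MvPolynomial ContinuousLinearMap

/-!
Evaluate polynomials in `z` and `w̄` at `T` by the hereditary rule `z^I w̄^J ↦ T^I (T^J)^*`.
This map is linear, sends `p(z) q̄(w̄)` to `p(T) q(T)^*` and, because the `T_i` commute with
every `f_i(T)`, sends `(1 - z_i w̄_i) f_i(z) f̄_i(w̄)` to `f_i(T) (1 - T_i T_i^*) f_i(T)^*`;
applying it to the polynomial identity gives the operator identity. Each term on its right is
positive, so `f(T) f(T)^* ≤ (1 - δ) I`, and `‖f(T)‖² = ‖f(T) f(T)^*‖` gives the norm bound.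
-/

/-- `T^I = T_1^{i_1} ⋯ T_N^{i_N}` for a tuple of operators and a multi-index. -/
noncomputable def opPow {H : Type*} [NormedAddCommGroup H] [NormedSpace ℂ H]
    {N : ℕ} (T : Fin N → H →L[ℂ] H) (I : Fin N → ℕ) : H →L[ℂ] H :=
  (List.ofFn fun i => (T i) ^ (I i)).prod

/-- Evaluation of a polynomial in `N` variables at a commuting tuple of operators. -/
noncomputable def evalOp {H : Type*} [NormedAddCommGroup H] [NormedSpace ℂ H]
    {N : ℕ} (T : Fin N → H →L[ℂ] H) (q : MvPolynomial (Fin N) ℂ) : H →L[ℂ] H :=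
  ∑ I ∈ q.support, q.coeff I • opPow T (fun i => I i)

section EvalOp

open scoped IsMulCommutative

variable {H : Type*} [NormedAddCommGroup H] [NormedSpace ℂ H] {N : ℕ} (T : Fin N → H →L[ℂ] H)

noncomputable def evalOpₗ : MvPolynomial (Fin N) ℂ →ₗ[ℂ] H →L[ℂ] H :=
  Finsupp.linearCombination ℂ (fun I : Fin N →₀ ℕ => opPow T I) ∘ₗ
    (AddMonoidAlgebra.coeffLinearEquiv ℂ).toLinearMap

lemma evalOpₗ_apply (q : MvPolynomial (Fin N) ℂ) : evalOpₗ T q = evalOp T q := rfl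

lemma evalOp_add (p q : MvPolynomial (Fin N) ℂ) : evalOp T (p + q) = evalOp T p + evalOp T q :=
  map_add (evalOpₗ T) p q

lemma evalOp_monomial (I : Fin N →₀ ℕ) (c : ℂ) : evalOp T (monomial I c) = c • opPow T I := by
  rw [← evalOpₗ_apply, ← single_eq_monomial]
  simp [evalOpₗ, AddMonoidAlgebra.coeff_single]

variable {T}

lemma isMulCommutative_adjoin_range (hcomm : ∀ i j, Commute (T i) (T j)) :
    IsMulCommutative (Algebra.adjoin ℂ (Set.range T)) :=
  Algebra.isMulCommutative_adjoin ℂ (by rintro _ ⟨i, rfl⟩ _ ⟨j, rfl⟩; exact (hcomm i j).eq)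

noncomputable def evalOpAlgHom (hcomm : ∀ i j, Commute (T i) (T j)) :
    MvPolynomial (Fin N) ℂ →ₐ[ℂ] H →L[ℂ] H :=
  haveI := isMulCommutative_adjoin_range hcomm
  (Algebra.adjoin ℂ (Set.range T)).val.comp
    (aeval fun i => ⟨T i, Algebra.subset_adjoin (Set.mem_range_self i)⟩)

lemma evalOpAlgHom_apply (hcomm : ∀ i j, Commute (T i) (T j)) (q : MvPolynomial (Fin N) ℂ) :
    evalOpAlgHom hcomm q = evalOp T q := by
  have := isMulCommutative_adjoin_range hcomm
  induction q using MvPolynomial.induction_on' with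
  | add p q hp hq => rw [map_add, hp, hq, evalOp_add]
  | monomial I c =>
    rw [evalOp_monomial, evalOpAlgHom, AlgHom.comp_apply, aeval_monomial, ← Algebra.smul_def,
      map_smul, Finsupp.prod_fintype _ _ fun _ => pow_zero _, ← List.prod_ofFn, map_list_prod,
      List.map_ofFn]
    rfl

variable (hcomm : ∀ i j, Commute (T i) (T j))
include hcomm

lemma evalOp_mul (p q : MvPolynomial (Fin N) ℂ) : evalOp T (p * q) = evalOp T p * evalOp T q := by
  simp only [← evalOpAlgHom_apply hcomm, map_mul]

lemma evalOp_X (i : Fin N) : evalOp T (X i) = T i := by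
  have := isMulCommutative_adjoin_range hcomm
  rw [← evalOpAlgHom_apply hcomm, evalOpAlgHom, AlgHom.comp_apply, aeval_X]
  rfl

lemma evalOp_one : evalOp T 1 = 1 := by
  rw [← evalOpAlgHom_apply hcomm, map_one]

lemma evalOp_C (c : ℂ) : evalOp T (C c) = c • 1 := by
  rw [← evalOpAlgHom_apply hcomm, algHom_C, Algebra.algebraMap_eq_smul_one]

lemma commute_evalOp (i : Fin N) (p : MvPolynomial (Fin N) ℂ) : Commute (T i) (evalOp T p) := by
  simpa only [evalOpAlgHom_apply hcomm, evalOp_X hcomm] using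
    (Commute.all (X i) p).map (evalOpAlgHom hcomm)

end EvalOp

/-- `p(z) · conj (q(w))`, the variables `Sum.inr i` standing for `conj (w i)`. -/
noncomputable def sesqMul {σ : Type*} (p q : MvPolynomial σ ℂ) : MvPolynomial (σ ⊕ σ) ℂ :=
  rename Sum.inl p * rename Sum.inr (map (starRingEnd ℂ) q)

lemma eval_sesqMul {σ : Type*} (z w : σ → ℂ) (p q : MvPolynomial σ ℂ) :
    eval (Sum.elim z (starRingEnd ℂ ∘ w)) (sesqMul p q) = eval z p * starRingEnd ℂ (eval w q) := by
  rw [sesqMul, map_mul, eval_rename, eval_rename, Sum.elim_comp_inl, Sum.elim_comp_inr,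
    map_eval]

section Hereditary

variable {H : Type*} [NormedAddCommGroup H] [InnerProductSpace ℂ H] [CompleteSpace H] {N : ℕ}
  (T : Fin N → H →L[ℂ] H)

noncomputable def hereditaryEval : MvPolynomial (Fin N ⊕ Fin N) ℂ →ₗ[ℂ] H →L[ℂ] H :=
  Finsupp.linearCombination ℂ (fun K : Fin N ⊕ Fin N →₀ ℕ =>
      opPow T (fun i => K (.inl i)) * adjoint (opPow T (fun i => K (.inr i)))) ∘ₗ
    (AddMonoidAlgebra.coeffLinearEquiv ℂ).toLinearMap

lemma hereditaryEval_monomial (K : Fin N ⊕ Fin N →₀ ℕ) (c : ℂ) :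
    hereditaryEval T (monomial K c) =
      c • (opPow T (fun i => K (.inl i)) * adjoint (opPow T (fun i => K (.inr i)))) := by
  rw [← single_eq_monomial]
  simp [hereditaryEval, AddMonoidAlgebra.coeff_single]

lemma hereditaryEval_sesqMul (p q : MvPolynomial (Fin N) ℂ) :
    hereditaryEval T (sesqMul p q) = evalOp T p * adjoint (evalOp T q) := by
  induction p using MvPolynomial.induction_on' with
  | add p₁ p₂ h₁ h₂ =>
    rw [sesqMul, map_add, add_mul, map_add, ← sesqMul, ← sesqMul, h₁, h₂, evalOp_add, add_mul]
  | monomial I c =>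
    induction q using MvPolynomial.induction_on' with
    | add q₁ q₂ h₁ h₂ =>
      rw [sesqMul, map_add, map_add, mul_add, map_add, ← sesqMul, ← sesqMul, h₁, h₂, evalOp_add,
        map_add, mul_add]
    | monomial J d =>
      rw [sesqMul, rename_monomial, map_monomial, rename_monomial, monomial_mul,
        hereditaryEval_monomial, evalOp_monomial, evalOp_monomial, map_smulₛₗ, smul_mul_smul_comm]
      simp [Finsupp.mapDomain_apply Sum.inl_injective, Finsupp.mapDomain_apply Sum.inr_injective,
        Finsupp.mapDomain_of_notMem_range]

lemma hereditaryEval_defect (hcomm : ∀ i j, Commute (T i) (T j)) (i : Fin N)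
    (p : MvPolynomial (Fin N) ℂ) :
    hereditaryEval T ((1 - X (.inl i) * X (.inr i)) * sesqMul p p) =
      evalOp T p * (1 - T i * adjoint (T i)) * adjoint (evalOp T p) := by
  have hsplit : (1 - X (.inl i) * X (.inr i)) * sesqMul p p =
      sesqMul p p - sesqMul (X i * p) (X i * p) := by
    simp only [sesqMul, map_mul, rename_X, map_X]
    ring
  rw [hsplit, map_sub, hereditaryEval_sesqMul, hereditaryEval_sesqMul, evalOp_mul hcomm,
    evalOp_X hcomm, (commute_evalOp hcomm i p).eq]
  simp only [← star_eq_adjoint, star_mul]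
  noncomm_ring

end Hereditary

section CStarAlgebra

variable {A : Type*} [CStarAlgebra A] [PartialOrder A] [StarOrderedRing A]

lemma one_sub_mul_star_nonneg {a : A} (ha : ‖a‖ ≤ 1) : 0 ≤ 1 - a * star a := by
  refine sub_nonneg.2 <| (CStarAlgebra.norm_le_one_iff_of_nonneg _ (mul_star_self_nonneg a)).1 ?_
  rw [CStarRing.norm_self_mul_star]
  exact mul_le_one₀ ha (norm_nonneg a) ha

lemma norm_le_sqrt_of_mul_star_le {a : A} {r : ℝ} (h : a * star a ≤ algebraMap ℝ A r) :
    ‖a‖ ≤ √r := by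
  rcases le_or_gt 0 r with hr | hr
  · rw [Real.le_sqrt (norm_nonneg a) hr, sq, ← CStarRing.norm_self_mul_star]
    exact (CStarAlgebra.norm_le_iff_le_algebraMap _ hr (mul_star_self_nonneg a)).2 h
  · have hzero : a * star a ≤ 0 := h.trans <| by simpa using algebraMap_mono A hr.le
    have ha : a = 0 :=
      (CStarRing.mul_star_self_eq_zero_iff a).1 (hzero.antisymm (mul_star_self_nonneg a))
    simp [ha]

end CStarAlgebra

theorem polynomial_factorization_transfer_general
    {H : Type*} [NormedAddCommGroup H] [InnerProductSpace ℂ H] [CompleteSpace H]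
    {N : ℕ} (T : Fin N → H →L[ℂ] H)
    (hcomm : ∀ i j, Commute (T i) (T j))
    (hT : ∀ i, ‖T i‖ < 1)
    (f f₀ : MvPolynomial (Fin N) ℂ) (fi : Fin N → MvPolynomial (Fin N) ℂ)
    (δ : ℝ)
    (hfact : ∀ z w : Fin N → ℂ,
      1 - MvPolynomial.eval z f * starRingEnd ℂ (MvPolynomial.eval w f) =
        (δ : ℂ) + MvPolynomial.eval z f₀ * starRingEnd ℂ (MvPolynomial.eval w f₀) +
          ∑ i, (1 - z i * starRingEnd ℂ (w i)) *
            (MvPolynomial.eval z (fi i) * starRingEnd ℂ (MvPolynomial.eval w (fi i)))) :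
    (1 - evalOp T f * adjoint (evalOp T f) =
      (δ : ℂ) • (1 : H →L[ℂ] H) + evalOp T f₀ * adjoint (evalOp T f₀) +
        ∑ i, evalOp T (fi i) * (1 - T i * adjoint (T i)) * adjoint (evalOp T (fi i))) ∧
    ‖evalOp T f‖ ≤ Real.sqrt (1 - δ) := by
  have hker : (sesqMul 1 1 - sesqMul f f : MvPolynomial (Fin N ⊕ Fin N) ℂ) =
      sesqMul (C (δ : ℂ)) 1 + sesqMul f₀ f₀ +
        ∑ i, (1 - X (.inl i) * X (.inr i)) * sesqMul (fi i) (fi i) := by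
    refine MvPolynomial.funext fun v => ?_
    obtain ⟨z, w, rfl⟩ : ∃ z w, v = Sum.elim z (starRingEnd ℂ ∘ w) :=
      ⟨v ∘ .inl, starRingEnd ℂ ∘ v ∘ .inr, by ext (i | i) <;> simp⟩
    simp only [map_sub, map_add, map_sum, map_mul, map_one, eval_sesqMul, eval_X, eval_C,
      Sum.elim_inl, Sum.elim_inr, Function.comp_apply]
    simpa using hfact z w
  have hid := congrArg (hereditaryEval T) hker
  simp only [map_sub, map_add, map_sum, hereditaryEval_sesqMul, hereditaryEval_defect T hcomm,
    evalOp_one hcomm, evalOp_C hcomm, adjoint_one, mul_one] at hid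
  refine ⟨hid, norm_le_sqrt_of_mul_star_le ?_⟩
  have hrest : 0 ≤ evalOp T f₀ * adjoint (evalOp T f₀) +
      ∑ i, evalOp T (fi i) * (1 - T i * adjoint (T i)) * adjoint (evalOp T (fi i)) := by
    simp only [← star_eq_adjoint]
    exact add_nonneg (mul_star_self_nonneg _) <| sum_nonneg fun i _ =>
      star_right_conjugate_nonneg (one_sub_mul_star_nonneg (hT i).le) _
  calc evalOp T f * adjoint (evalOp T f)
      = algebraMap ℝ _ (1 - δ) - (evalOp T f₀ * adjoint (evalOp T f₀) +
          ∑ i, evalOp T (fi i) * (1 - T i * adjoint (T i)) * adjoint (evalOp T (fi i))) := by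
        rw [Algebra.algebraMap_eq_smul_one, sub_smul, one_smul, ← Complex.coe_smul, sub_sub,
          ← add_assoc, ← hid, sub_sub_cancel]
    _ ≤ algebraMap ℝ _ (1 - δ) := sub_le_self _ hrest

theorem polynomial_factorization_transfer
    {H : Type*} [NormedAddCommGroup H] [InnerProductSpace ℂ H] [CompleteSpace H]
    {N : ℕ} (T : Fin N → H →L[ℂ] H)
    (hcomm : ∀ i j, Commute (T i) (T j))
    (hT : ∀ i, ‖T i‖ < 1)
    (f f₀ : MvPolynomial (Fin N) ℂ) (fi : Fin N → MvPolynomial (Fin N) ℂ)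
    (δ : ℝ) (hδ : 0 < δ)
    (hfact : ∀ z w : Fin N → ℂ,
      1 - MvPolynomial.eval z f * starRingEnd ℂ (MvPolynomial.eval w f) =
        (δ : ℂ) + MvPolynomial.eval z f₀ * starRingEnd ℂ (MvPolynomial.eval w f₀) +
          ∑ i, (1 - z i * starRingEnd ℂ (w i)) *
            (MvPolynomial.eval z (fi i) * starRingEnd ℂ (MvPolynomial.eval w (fi i)))) :
    (1 - evalOp T f * adjoint (evalOp T f) =
      (δ : ℂ) • (1 : H →L[ℂ] H) + evalOp T f₀ * adjoint (evalOp T f₀) +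
        ∑ i, evalOp T (fi i) * (1 - T i * adjoint (T i)) * adjoint (evalOp T (fi i))) ∧
    ‖evalOp T f‖ ≤ Real.sqrt (1 - δ) :=
  polynomial_factorization_transfer_general T hcomm hT f f₀ fi δ hfact
end

section
/- Suppose P(z) = C_0 D_1(z) C_1 where C_0 ∈ M_{m,p}(ℂ), C_1 ∈ M_{q,n}(ℂ) are scalar matrices with ‖C_0‖ < 1, ‖C_1‖ < 1, and D_1(z) is a p × q diagonal-type matrix of monomials in a single variable z_j with ‖D_1(z)‖ ≤ 1 for |z_j| ≤ 1. Then there exist a positive definite matrix R ∈ M_m with R ≥ δ I for some δ > 0, and matrices of polynomials P_0 and P_j such that I_m - P(z) P(w)^* = R + P_0(z) P_0(w)^* + (1 - z_j conj(w_j)) P_j(z) P_j(w)^* for all z, w ∈ ℂ^N. -/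
/-!
Write `D₁(ζ)_{kl} = B_{kl} ζ^{e_{kl}}` with `B = D₁(1)` a `0/1` matrix. Since `‖B‖ ≤ 1`, every
column of `B` has at most one nonzero entry, so `D₁(ζ) D₁(ξ)^*` is diagonal with entries
`∑_l |B_{kl}|² (ζ ξ̄)^{e_{kl}}`, and `1 - t^e = (1 - t)(1 + t + ⋯ + t^{e-1})` gives
`I - D₁(ζ) D₁(ξ)^* = Q + (1 - ζ ξ̄) A(ζ) A(ξ)^*` with `Q = diag(1 - ∑_l |B_{kl}|²) ≥ 0`.
Writing `I - C₁ C₁^* = S^* S`, the identity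
`I - C₀ D C₁ C₁^* D'^* C₀^* = (I - C₀ C₀^*) + C₀ (I - D D'^*) C₀^* + C₀ D (I - C₁ C₁^*) D'^* C₀^*`
yields the factorization with `R = I - C₀ C₀^* + C₀ Q C₀^* ≥ (1 - ‖C₀‖²) I`,
`P₀(z) = C₀ D₁(z_j) S^*` and `P_j(z) = C₀ A(z_j)`.
-/

open Complex Matrix ComplexOrder
open scoped Matrix.Norms.L2Operator

namespace Matrix

variable {ι κ : Type*} [Fintype ι] [Fintype κ] [DecidableEq κ]

theorem sum_col_norm_sq_le_l2_opNorm_sq (A : Matrix ι κ ℂ) (l : κ) :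
    ∑ k, ‖A k l‖ ^ 2 ≤ ‖A‖ ^ 2 := by
  have h := A.l2_opNorm_mulVec (EuclideanSpace.single l 1)
  rw [PiLp.norm_single, norm_one, mul_one] at h
  have h2 := pow_le_pow_left₀ (norm_nonneg _) h 2
  rw [EuclideanSpace.norm_sq_eq] at h2
  simpa [mulVec_single] using h2

theorem sum_row_norm_sq_le_l2_opNorm_sq [DecidableEq ι] (A : Matrix ι κ ℂ) (k : ι) :
    ∑ l, ‖A k l‖ ^ 2 ≤ ‖A‖ ^ 2 := by
  simpa [l2_opNorm_conjTranspose] using sum_col_norm_sq_le_l2_opNorm_sq Aᴴ k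

open scoped MatrixOrder in
theorem mul_conjTranspose_le_algebraMap_norm_sq [DecidableEq ι] (A : Matrix ι κ ℂ) :
    A * Aᴴ ≤ algebraMap ℝ (Matrix ι ι ℂ) (‖A‖ ^ 2) := by
  have h := IsSelfAdjoint.le_algebraMap_norm_self (a := A * Aᴴ)
    (isHermitian_mul_conjTranspose_self A)
  have hn : ‖A * Aᴴ‖ = ‖A‖ ^ 2 := by
    simpa [l2_opNorm_conjTranspose, sq] using l2_opNorm_conjTranspose_mul_self Aᴴ
  rwa [hn] at h

theorem posSemidef_norm_sq_smul_one_sub_mul_conjTranspose [DecidableEq ι] (A : Matrix ι κ ℂ) :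
    (((‖A‖ ^ 2 : ℝ) : ℂ) • (1 : Matrix ι ι ℂ) - A * Aᴴ).PosSemidef := by
  have h := A.mul_conjTranspose_le_algebraMap_norm_sq
  rwa [Matrix.le_iff, Algebra.algebraMap_eq_smul_one, ← Complex.coe_smul] at h

open scoped MatrixOrder in
theorem exists_one_sub_mul_conjTranspose_eq_conjTranspose_mul_self [DecidableEq ι]
    (A : Matrix ι κ ℂ) (hA : ‖A‖ ≤ 1) : ∃ S : Matrix ι ι ℂ, 1 - A * Aᴴ = Sᴴ * S := by
  have h : A * Aᴴ ≤ 1 := A.mul_conjTranspose_le_algebraMap_norm_sq.trans <| by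
    simpa using algebraMap_mono (Matrix ι ι ℂ) (pow_le_one₀ (n := 2) (norm_nonneg A) hA)
  exact CStarAlgebra.nonneg_iff_eq_star_mul_self.mp (sub_nonneg.mpr h)

theorem posSemidef_diagonal_one_sub_sum_row_norm_sq [DecidableEq ι] (A : Matrix ι κ ℂ)
    (hA : ‖A‖ ≤ 1) : (diagonal fun k => ((1 - ∑ l, ‖A k l‖ ^ 2 : ℝ) : ℂ)).PosSemidef :=
  posSemidef_diagonal_iff.mpr fun k => Complex.zero_le_real.mpr <| sub_nonneg.mpr <|
    (A.sum_row_norm_sq_le_l2_opNorm_sq k).trans (pow_le_one₀ (norm_nonneg A) hA)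

theorem apply_eq_zero_of_norm_apply_eq_one (A : Matrix ι κ ℂ) (hA : ‖A‖ ≤ 1) {k k' : ι}
    {l : κ} (hk : ‖A k l‖ = 1) (hk' : k' ≠ k) : A k' l = 0 := by
  have hsum := (A.sum_col_norm_sq_le_l2_opNorm_sq l).trans (pow_le_one₀ (norm_nonneg A) hA)
  have h := Finset.add_le_sum (f := fun i => ‖A i l‖ ^ 2) (fun _ _ => sq_nonneg _)
    (Finset.mem_univ k) (Finset.mem_univ k') hk'.symm
  simp only [hk, one_pow] at h
  simpa using le_antisymm (by linarith) (sq_nonneg ‖A k' l‖)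

theorem apply_eq_zero_or_apply_eq_zero_of_norm_le_one (A : Matrix ι κ ℂ)
    (hA01 : ∀ k l, A k l = 0 ∨ A k l = 1) (hA : ‖A‖ ≤ 1) (l : κ) {k k' : ι} (hkk' : k ≠ k') :
    A k l = 0 ∨ A k' l = 0 :=
  (hA01 k l).imp_right fun h1 => A.apply_eq_zero_of_norm_apply_eq_one hA (by simp [h1]) hkk'.symm

end Matrix

section Monomial

variable {ι κ : Type*}

def monomialMatrix (B : Matrix ι κ ℂ) (e : ι → κ → ℕ) (ζ : ℂ) : Matrix ι κ ℂ :=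
  Matrix.of fun k l => B k l * ζ ^ e k l

theorem exists_eq_monomialMatrix (D : ℂ → Matrix ι κ ℂ)
    (hD : ∀ k l, (∃ e : ℕ, ∀ z : ℂ, D z k l = z ^ e) ∨ (∀ z : ℂ, D z k l = 0)) :
    ∃ e : ι → κ → ℕ, ∀ z, D z = monomialMatrix (D 1) e z := by
  have h : ∀ k l, ∃ e : ℕ, ∀ z, D z k l = D 1 k l * z ^ e := fun k l =>
    (hD k l).elim (fun ⟨e, he⟩ => ⟨e, fun z => by simp [he]⟩)
      (fun h0 => ⟨0, fun z => by simp [h0]⟩)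
  choose e he using h
  exact ⟨e, fun z => Matrix.ext fun k l => he k l z⟩

variable [DecidableEq ι]

/-- The factor `A` of the header: `(1 - ζ ξ̄) G(ζ) G(ξ)ᴴ` telescopes to the diagonal matrix with
entries `∑ l, |B k l|² (1 - (ζ ξ̄) ^ e k l)`. -/
def geomFactor (B : Matrix ι κ ℂ) (e : ι → κ → ℕ) (ζ : ℂ) :
    Matrix ι (Σ kl : ι × κ, Fin (e kl.1 kl.2)) ℂ :=
  Matrix.of fun k c => if c.1.1 = k then B k c.1.2 * ζ ^ (c.2 : ℕ) else 0

variable (B : Matrix ι κ ℂ) (e : ι → κ → ℕ) [Fintype κ]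

theorem monomialMatrix_mul_conjTranspose (hB : ∀ l k k', k ≠ k' → B k l = 0 ∨ B k' l = 0)
    (ζ ξ : ℂ) :
    monomialMatrix B e ζ * (monomialMatrix B e ξ)ᴴ =
      diagonal fun k => ∑ l, ((‖B k l‖ ^ 2 : ℝ) : ℂ) * (ζ * starRingEnd ℂ ξ) ^ e k l := by
  ext k k'
  rw [mul_apply, diagonal_apply]
  split_ifs with h
  · subst h
    refine Finset.sum_congr rfl fun l _ => ?_
    simp only [monomialMatrix, conjTranspose_apply, of_apply, star_mul', star_pow,
      Complex.star_def]
    push_cast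
    rw [← Complex.mul_conj']
    ring
  · refine Finset.sum_eq_zero fun l _ => ?_
    rcases hB l k k' h with h0 | h0 <;> simp [monomialMatrix, h0]

variable [Fintype ι]

theorem geomFactor_mul_conjTranspose (ζ ξ : ℂ) :
    geomFactor B e ζ * (geomFactor B e ξ)ᴴ =
      diagonal fun k => ∑ l, ((‖B k l‖ ^ 2 : ℝ) : ℂ) *
        ∑ i ∈ Finset.range (e k l), (ζ * starRingEnd ℂ ξ) ^ i := by
  ext k k'
  rw [mul_apply, diagonal_apply, Fintype.sum_sigma, Fintype.sum_prod_type]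
  split_ifs with h
  · subst h
    simp only [geomFactor, of_apply, conjTranspose_apply, RCLike.star_def, ite_mul, zero_mul,
      Finset.sum_ite_irrel, Finset.sum_const_zero, Finset.sum_ite_eq', Finset.mem_univ,
      if_true, map_mul, map_pow, ofReal_pow]
    refine Finset.sum_congr rfl fun l _ => ?_
    rw [Finset.mul_sum, ← Fin.sum_univ_eq_sum_range]
    refine Finset.sum_congr rfl fun i _ => ?_
    rw [← Complex.mul_conj']
    ring
  · simp [geomFactor, h]

theorem one_sub_monomialMatrix_mul_conjTranspose
    (hB : ∀ l k k', k ≠ k' → B k l = 0 ∨ B k' l = 0) (ζ ξ : ℂ) :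
    1 - monomialMatrix B e ζ * (monomialMatrix B e ξ)ᴴ =
      diagonal (fun k => ((1 - ∑ l, ‖B k l‖ ^ 2 : ℝ) : ℂ)) +
        (1 - ζ * starRingEnd ℂ ξ) • (geomFactor B e ζ * (geomFactor B e ξ)ᴴ) := by
  rw [monomialMatrix_mul_conjTranspose B e hB, geomFactor_mul_conjTranspose, ← diagonal_one,
    ← diagonal_smul, diagonal_sub, diagonal_add]
  congr 1
  funext k
  have hgeom : ∀ (c t : ℂ) (n : ℕ), (1 - t) * (c * ∑ i ∈ Finset.range n, t ^ i) = c - c * t ^ n :=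
    fun c t n => by rw [mul_left_comm, mul_neg_geom_sum, mul_sub, mul_one]
  rw [Pi.smul_apply, smul_eq_mul, Finset.mul_sum]
  simp only [hgeom]
  push_cast
  rw [Finset.sum_sub_distrib]
  ring

end Monomial

section PolynomialEntries

variable {σ R α β γ : Type*} [CommSemiring R]

def HasPolynomialEntries (F : (σ → R) → Matrix α β R) : Prop :=
  ∀ k l, ∃ f : MvPolynomial σ R, ∀ z, F z k l = MvPolynomial.eval z f

theorem hasPolynomialEntries_const (M : Matrix α β R) :
    HasPolynomialEntries fun _ : σ → R => M :=
  fun k l => ⟨MvPolynomial.C (M k l), fun z => by simp⟩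

theorem HasPolynomialEntries.mul [Fintype β] {F : (σ → R) → Matrix α β R}
    {G : (σ → R) → Matrix β γ R} (hF : HasPolynomialEntries F) (hG : HasPolynomialEntries G) :
    HasPolynomialEntries fun z => F z * G z := by
  intro k l
  choose f hf using hF
  choose g hg using hG
  exact ⟨∑ b, f k b * g b l, fun z => by simp [mul_apply, hf, hg]⟩

theorem HasPolynomialEntries.submatrix_id {F : (σ → R) → Matrix α β R}
    (hF : HasPolynomialEntries F) (f : γ → β) :
    HasPolynomialEntries fun z => (F z).submatrix id f :=
  fun k l => hF k (f l)

theorem hasPolynomialEntries_of_monomial (M : R → Matrix α β R)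
    (hM : ∀ k l, ∃ (c : R) (e : ℕ), ∀ ζ, M ζ k l = c * ζ ^ e) (j : σ) :
    HasPolynomialEntries fun z => M (z j) := by
  intro k l
  obtain ⟨c, e, h⟩ := hM k l
  exact ⟨MvPolynomial.C c * MvPolynomial.X j ^ e, fun z => by simp [h]⟩

end PolynomialEntries

theorem hasPolynomialEntries_monomialMatrix {σ ι κ : Type*} (B : Matrix ι κ ℂ)
    (e : ι → κ → ℕ) (j : σ) : HasPolynomialEntries fun z => monomialMatrix B e (z j) :=
  hasPolynomialEntries_of_monomial _ (fun k l => ⟨B k l, e k l, fun _ => rfl⟩) j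

theorem hasPolynomialEntries_geomFactor {σ ι κ : Type*} [DecidableEq ι] (B : Matrix ι κ ℂ)
    (e : ι → κ → ℕ) (j : σ) : HasPolynomialEntries fun z => geomFactor B e (z j) := by
  refine hasPolynomialEntries_of_monomial _ (fun k c => ?_) j
  by_cases h : c.1.1 = k
  · exact ⟨B k c.1.2, c.2, fun ζ => by simp [geomFactor, h]⟩
  · exact ⟨0, 0, fun ζ => by simp [geomFactor, h]⟩

theorem one_sub_mul_conjTranspose_eq_of_factorization {R m p q r s : Type*} [CommRing R]
    [StarRing R] [Fintype p] [Fintype q] [Fintype r] [Fintype s] [DecidableEq m] [DecidableEq p]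
    [DecidableEq q] (C₀ : Matrix m p R) (D D' : Matrix p q R) (C₁ : Matrix q r R)
    (Q : Matrix p p R) (A A' : Matrix p s R) (S : Matrix q q R) (t : R)
    (hD : 1 - D * D'ᴴ = Q + t • (A * A'ᴴ)) (hC₁ : 1 - C₁ * C₁ᴴ = Sᴴ * S) :
    1 - (C₀ * D * C₁) * (C₀ * D' * C₁)ᴴ =
      (1 - C₀ * C₀ᴴ + C₀ * Q * C₀ᴴ) + (C₀ * D * Sᴴ) * (C₀ * D' * Sᴴ)ᴴ +
        t • ((C₀ * A) * (C₀ * A')ᴴ) := by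
  have hD' : D * D'ᴴ = 1 - (Q + t • (A * A'ᴴ)) := by rw [← hD, sub_sub_cancel]
  have hC₁' : C₁ * C₁ᴴ = 1 - Sᴴ * S := by rw [← hC₁, sub_sub_cancel]
  calc 1 - (C₀ * D * C₁) * (C₀ * D' * C₁)ᴴ = 1 - C₀ * (D * (C₁ * C₁ᴴ) * D'ᴴ) * C₀ᴴ := by
        simp only [conjTranspose_mul, Matrix.mul_assoc]
    _ = 1 - C₀ * (D * D'ᴴ) * C₀ᴴ + (C₀ * D * Sᴴ) * (C₀ * D' * Sᴴ)ᴴ := by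
        rw [hC₁']
        simp only [conjTranspose_mul, conjTranspose_conjTranspose, Matrix.mul_sub,
          Matrix.sub_mul, Matrix.mul_one, Matrix.mul_assoc]
        abel
    _ = _ := by
        rw [hD']
        simp only [conjTranspose_mul, Matrix.mul_sub, Matrix.sub_mul, Matrix.mul_add,
          Matrix.add_mul, Matrix.mul_one, Matrix.mul_smul, Matrix.smul_mul, Matrix.mul_assoc]
        abel

theorem length_one_factorization {N m n p q : ℕ} (j : Fin N)
    (C₀ : Matrix (Fin m) (Fin p) ℂ) (C₁ : Matrix (Fin q) (Fin n) ℂ)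
    (hC₀ : ‖C₀‖ < 1) (hC₁ : ‖C₁‖ < 1)
    (D₁ : ℂ → Matrix (Fin p) (Fin q) ℂ)
    (hD₁mono : ∀ k l, (∃ e : ℕ, ∀ z : ℂ, D₁ z k l = z ^ e) ∨ (∀ z : ℂ, D₁ z k l = 0))
    (hD₁ : ∀ z : ℂ, ‖z‖ ≤ 1 → ‖D₁ z‖ ≤ 1)
    (P : (Fin N → ℂ) → Matrix (Fin m) (Fin n) ℂ)
    (hP : ∀ z : Fin N → ℂ, P z = C₀ * D₁ (z j) * C₁) :
    ∃ (δ : ℝ), 0 < δ ∧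
    ∃ (R : Matrix (Fin m) (Fin m) ℂ), (R - (δ : ℂ) • (1 : Matrix (Fin m) (Fin m) ℂ)).PosSemidef ∧
    ∃ (p₀ q₀ : ℕ) (P₀ : (Fin N → ℂ) → Matrix (Fin m) (Fin p₀) ℂ)
      (Pj : (Fin N → ℂ) → Matrix (Fin m) (Fin q₀) ℂ),
      (∀ k l, ∃ f : MvPolynomial (Fin N) ℂ, ∀ z, P₀ z k l = MvPolynomial.eval z f) ∧
      (∀ k l, ∃ f : MvPolynomial (Fin N) ℂ, ∀ z, Pj z k l = MvPolynomial.eval z f) ∧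
      ∀ z w : Fin N → ℂ,
        (1 : Matrix (Fin m) (Fin m) ℂ) - P z * (P w)ᴴ =
          R + P₀ z * (P₀ w)ᴴ + (1 - z j * starRingEnd ℂ (w j)) • (Pj z * (Pj w)ᴴ) := by
  obtain ⟨e, hD₁e⟩ := exists_eq_monomialMatrix D₁ hD₁mono
  have hB : ‖D₁ 1‖ ≤ 1 := hD₁ 1 (by simp)
  have hB01 : ∀ k l, D₁ 1 k l = 0 ∨ D₁ 1 k l = 1 := fun k l =>
    (hD₁mono k l).elim (fun ⟨e, he⟩ => by simp [he]) (fun h0 => by simp [h0])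
  generalize D₁ 1 = B at hD₁e hB hB01
  obtain ⟨S, hS⟩ := C₁.exists_one_sub_mul_conjTranspose_eq_conjTranspose_mul_self hC₁.le
  set Q := diagonal fun k => ((1 - ∑ l, ‖B k l‖ ^ 2 : ℝ) : ℂ)
  have hQ : Q.PosSemidef := B.posSemidef_diagonal_one_sub_sum_row_norm_sq hB
  set ε := Fintype.equivFin (Σ kl : Fin p × Fin q, Fin (e kl.1 kl.2))
  refine ⟨1 - ‖C₀‖ ^ 2, by nlinarith [norm_nonneg C₀], 1 - C₀ * C₀ᴴ + C₀ * Q * C₀ᴴ, ?_, q, _,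
    fun z => C₀ * D₁ (z j) * Sᴴ, fun z => (C₀ * geomFactor B e (z j)).submatrix id ε.symm, ?_, ?_,
    fun z w => ?_⟩
  · convert C₀.posSemidef_norm_sq_smul_one_sub_mul_conjTranspose.add
      (hQ.mul_mul_conjTranspose_same C₀) using 1
    push_cast
    module
  · simp only [hD₁e]
    exact ((hasPolynomialEntries_const C₀).mul (hasPolynomialEntries_monomialMatrix B e j)).mul
      (hasPolynomialEntries_const Sᴴ)
  · have h : HasPolynomialEntries fun z : Fin N → ℂ => C₀ * geomFactor B e (z j) :=
      (hasPolynomialEntries_const C₀).mul (hasPolynomialEntries_geomFactor B e j)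
    exact h.submatrix_id ε.symm
  · dsimp only
    rw [conjTranspose_submatrix, submatrix_mul_equiv, submatrix_id_id, hP, hP, hD₁e, hD₁e]
    exact one_sub_mul_conjTranspose_eq_of_factorization C₀ _ _ C₁ Q _ _ S _
      (one_sub_monomialMatrix_mul_conjTranspose B e
        (fun l _ _ => B.apply_eq_zero_or_apply_eq_zero_of_norm_le_one hB01 hB l) (z j) (w j)) hS
end
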